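/- For every finite simple graph G with maximum degree Δ(G), the star b-chromatic number satisfies S_b(G) ≤ Δ(G)² + 1. -/

import Mathlib

/-!
Definitions for star colorings, star recoloring steps, the strict partial order `≺ₛ`,
star b-vertices, the star (b-)chromatic number, star degrees and related notions,
following Božović, Mesarič Štesl, Peterin,
"On star b-chromatic number of a graph".
-/

variable {V : Type*}

/-- A proper coloring which is a *star coloring*: no path on four vertices
(vertices `a-b-x-y` with the three edges `ab`, `bx`, `xy`) is bicolored,
i.e. the union of any two color classes induces a star forest. -/
def IsStarColoring (G : SimpleGraph V) (c : V → ℕ) : Prop :=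
  (∀ ⦃u w⦄, G.Adj u w → c u ≠ c w) ∧
  ∀ a b x y : V, G.Adj a b → G.Adj b x → G.Adj x y →
    a ≠ x → b ≠ y → a ≠ y → ¬(c a = c x ∧ c b = c y)

/-- The set of colors used by a coloring. -/
def colorsUsed [Fintype V] (c : V → ℕ) : Finset ℕ :=
  Finset.image c Finset.univ

/-- `c'` is obtained from `c` by a *star recoloring step*: some color class `Vᵢ`
of the star coloring `c` is completely recolored, each of its vertices receiving one
of the remaining colors of `c`, so that the result `c'` is again a star coloring
(using the colors of `c` minus `i`). We write `c' ⊲ₛ c`. -/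
def StarRecolorStep [Fintype V] (G : SimpleGraph V) (c' c : V → ℕ) : Prop :=
  IsStarColoring G c ∧ IsStarColoring G c' ∧
  ∃ i ∈ colorsUsed c,
    (∀ v, c v ≠ i → c' v = c v) ∧
    ∀ v, c v = i → c' v ≠ i ∧ c' v ∈ colorsUsed c

/-- A minimal element of the strict partial order `≺ₛ` (the transitive closure of
the star recoloring step relation `⊲ₛ`): a star coloring on which no star
recoloring step can be performed. -/
def IsStarBColoring [Fintype V] (G : SimpleGraph V) (c : V → ℕ) : Prop :=
  IsStarColoring G c ∧ ∀ c', ¬ StarRecolorStep G c' c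

/-- The *star b-chromatic number* `Sᵦ(G)`: the maximum number of colors used by a
minimal element of `≺ₛ`. -/
noncomputable def starBChromaticNumber [Fintype V] (G : SimpleGraph V) : ℕ :=
  sSup {n | ∃ c : V → ℕ, IsStarBColoring G c ∧ (colorsUsed c).card = n}

/-- The *star chromatic number* `S(G)`: the minimum number of colors in a star coloring. -/
noncomputable def starChromaticNumber [Fintype V] (G : SimpleGraph V) : ℕ :=
  sInf {n | ∃ c : V → ℕ, IsStarColoring G c ∧ (colorsUsed c).card = n}

/-- A color `j` is *blocked* for the vertex `v` under the star coloring `c`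
if `j` is the color of `v` itself, or recoloring `v` alone with `j` destroys
the star coloring property. -/
def ColorBlockedFor [DecidableEq V] (G : SimpleGraph V) (c : V → ℕ) (v : V) (j : ℕ) : Prop :=
  j = c v ∨ ¬ IsStarColoring G (Function.update c v j)

/-- A color of `c` which is not blocked for `v` is *available* for `v`. -/
def ColorAvailableFor [Fintype V] [DecidableEq V] (G : SimpleGraph V) (c : V → ℕ)
    (v : V) (j : ℕ) : Prop :=
  j ∈ colorsUsed c ∧ ¬ ColorBlockedFor G c v j

/-- `u-b-x-w` is an induced path on four vertices of `G`. -/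
def IsInducedP4 (G : SimpleGraph V) (u b x w : V) : Prop :=
  G.Adj u b ∧ G.Adj b x ∧ G.Adj x w ∧
  ¬ G.Adj u x ∧ ¬ G.Adj b w ∧ ¬ G.Adj u w ∧
  u ≠ x ∧ b ≠ w ∧ u ≠ w

/-- The relation `~ᵢ` on a color class: two vertices of the same color joined
by an induced path on four vertices. -/
def P4Rel (G : SimpleGraph V) (c : V → ℕ) (u w : V) : Prop :=
  c u = c w ∧ ∃ b x, IsInducedP4 G u b x w

/-- The `P₄`-system of `v`: its equivalence class under the
reflexive-transitive closure of `~ᵢ`. -/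
def P4System (G : SimpleGraph V) (c : V → ℕ) (v : V) : Set V :=
  {u | Relation.ReflTransGen (P4Rel G c) v u}

/-- An available color `j` for `v` is *blocked for the `P₄`-system of `v`* if every
recoloring of the color class of `v` (each vertex receiving an available color)
in which `v` is recolored by `j` yields a bicolored path on four vertices between
two vertices of the `P₄`-system of `v`. -/
def BlockedForP4System [Fintype V] [DecidableEq V] (G : SimpleGraph V) (c : V → ℕ)
    (v : V) (j : ℕ) : Prop :=
  ∀ c' : V → ℕ,
    (∀ u, c u ≠ c v → c' u = c u) →
    (∀ u, c u = c v → ColorAvailableFor G c u (c' u)) →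
    c' v = j →
    ∃ u w b x, u ∈ P4System G c v ∧ w ∈ P4System G c v ∧
      G.Adj u b ∧ G.Adj b x ∧ G.Adj x w ∧ u ≠ x ∧ b ≠ w ∧ u ≠ w ∧
      c' u = c' x ∧ c' b = c' w

/-- A *star b-vertex*: every available color for `v` is blocked for its `P₄`-system. -/
def IsStarBVertex [Fintype V] [DecidableEq V] (G : SimpleGraph V) (c : V → ℕ) (v : V) : Prop :=
  ∀ j, ColorAvailableFor G c v j → BlockedForP4System G c v j

/-- The *star degree* `dˢ_G(v)` of a vertex: the maximum number of colors blocked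
for `v` over all star colorings of `G`. -/
noncomputable def starDegree [Fintype V] [DecidableEq V] (G : SimpleGraph V) (v : V) : ℕ :=
  sSup {n | ∃ c : V → ℕ, IsStarColoring G c ∧
    {j | j ∈ colorsUsed c ∧ ColorBlockedFor G c v j}.ncard = n}

/-- The `mₛ`-degree of a graph: the largest `k` such that `G` has `k` vertices
of star degree at least `k - 1` (equivalently, with the vertices ordered by
non-increasing star degree, `mₛ(G) = max {i : i - 1 ≤ dˢ_G(vᵢ)}`). -/
noncomputable def msDegree [Fintype V] [DecidableEq V] (G : SimpleGraph V) : ℕ :=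
  sSup {k | ∃ s : Finset V, s.card = k ∧ ∀ v ∈ s, k - 1 ≤ starDegree G v}

/-- The maximum degree `Δ(G)` of a graph. -/
noncomputable def maxDeg (G : SimpleGraph V) : ℕ :=
  sSup {d | ∃ v : V, (G.neighborSet v).ncard = d}

/-- The *b-chromatic number* `φ(G)`: the maximum number of colors of a proper coloring
in which every color class contains a vertex whose closed neighborhood contains
all the colors. -/
noncomputable def bChromaticNumber [Fintype V] (G : SimpleGraph V) : ℕ :=
  sSup {k | ∃ c : V → ℕ, (∀ ⦃u w⦄, G.Adj u w → c u ≠ c w) ∧ (colorsUsed c).card = k ∧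
    ∀ i ∈ colorsUsed c, ∃ v, c v = i ∧
      ∀ j ∈ colorsUsed c, ∃ u, (u = v ∨ G.Adj v u) ∧ c u = j}

/-- The join `G ∨ H` of two simple graphs: disjoint union of `G` and `H`
together with all edges between the two vertex sets. -/
def graphJoin {α β : Type*} (G : SimpleGraph α) (H : SimpleGraph β) :
    SimpleGraph (α ⊕ β) where
  Adj x y :=
    (∃ a b, x = Sum.inl a ∧ y = Sum.inl b ∧ G.Adj a b) ∨
    (∃ a b, x = Sum.inr a ∧ y = Sum.inr b ∧ H.Adj a b) ∨
    (∃ a b, x = Sum.inl a ∧ y = Sum.inr b) ∨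
    (∃ a b, x = Sum.inr a ∧ y = Sum.inl b)
  symm := by
    refine ⟨?_⟩
    rintro x y (⟨a,b,rfl,rfl,h⟩|⟨a,b,rfl,rfl,h⟩|⟨a,b,rfl,rfl⟩|⟨a,b,rfl,rfl⟩)
    · exact Or.inl ⟨b, a, rfl, rfl, h.symm⟩
    · exact Or.inr (Or.inl ⟨b, a, rfl, rfl, h.symm⟩)
    · exact Or.inr (Or.inr (Or.inr ⟨b, a, rfl, rfl⟩))
    · exact Or.inr (Or.inr (Or.inl ⟨b, a, rfl, rfl⟩))
  loopless := by
    refine ⟨?_⟩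
    rintro x (⟨a,b,h1,h2,h⟩|⟨a,b,h1,h2,h⟩|⟨a,b,h1,h2⟩|⟨a,b,h1,h2⟩) <;> subst h1 <;>
      simp_all [SimpleGraph.irrefl]

/-- `N₂(v)`: vertices at distance exactly two from `v`. -/
def distTwoSet (G : SimpleGraph V) (v : V) : Set V := {u | G.dist v u = 2}

/-- `N₃(v)`: vertices at distance exactly three from `v`. -/
def distThreeSet (G : SimpleGraph V) (v : V) : Set V := {u | G.dist v u = 3}

/-- `X(v)`: vertices at distance two from `v` with no neighbor at distance three from `v`. -/
def XSet (G : SimpleGraph V) (v : V) : Set V :=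
  {u | u ∈ distTwoSet G v ∧ ∀ w ∈ distThreeSet G v, ¬ G.Adj u w}

/-- `Y(v)`: vertices at distance two from `v` having a neighbor at distance three from `v`. -/
def YSet (G : SimpleGraph V) (v : V) : Set V := distTwoSet G v \ XSet G v

/-!
If a star b-coloring used more than `Δ² + 1` colors, any of its color classes could be
recolored: a vertex sees at most `1 + Δ + Δ(Δ - 1) = Δ² + 1` colors within distance two
(its own included), so it can take a used color missing from that ball. The two
equally colored pairs of a bicolored `P₄`, like the ends of an edge, lie within distance two of
each other, so two vertices that share a color after such a recoloring already shared one
before; hence the result is again a star coloring, contradicting minimality.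
-/

namespace SimpleGraph

section BallTwo

variable {V : Type*} [DecidableEq V] (G : SimpleGraph V) [G.LocallyFinite]

def ballTwo (v : V) : Finset V :=
  insert v <| G.neighborFinset v ∪
    (G.neighborFinset v).biUnion fun m => (G.neighborFinset m).erase v

variable {G}

theorem self_mem_ballTwo (v : V) : v ∈ G.ballTwo v :=
  Finset.mem_insert_self _ _

theorem mem_ballTwo_of_adj {v u : V} (h : G.Adj v u) : u ∈ G.ballTwo v :=
  Finset.mem_insert_of_mem <| Finset.mem_union_left _ <| (G.mem_neighborFinset v u).mpr h

theorem mem_ballTwo_of_adj_of_adj {v m u : V} (hvm : G.Adj v m) (hmu : G.Adj m u) :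
    u ∈ G.ballTwo v := by
  rcases eq_or_ne u v with rfl | huv
  · exact self_mem_ballTwo u
  · refine Finset.mem_insert_of_mem <| Finset.mem_union_right _ <| Finset.mem_biUnion.mpr ?_
    exact ⟨m, (G.mem_neighborFinset v m).mpr hvm,
      Finset.mem_erase.mpr ⟨huv, (G.mem_neighborFinset m u).mpr hmu⟩⟩

theorem card_ballTwo_le {D : ℕ} (hD : ∀ u, G.degree u ≤ D) (v : V) :
    (G.ballTwo v).card ≤ D ^ 2 + 1 := by
  have hsecond : ((G.neighborFinset v).biUnion fun m => (G.neighborFinset m).erase v).card ≤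
      D * (D - 1) :=
    calc _ ≤ ∑ m ∈ G.neighborFinset v, ((G.neighborFinset m).erase v).card :=
          Finset.card_biUnion_le
      _ ≤ ∑ _m ∈ G.neighborFinset v, (D - 1) := by
          refine Finset.sum_le_sum fun m hm => ?_
          have hvm : v ∈ G.neighborFinset m :=
            (G.mem_neighborFinset m v).mpr ((G.mem_neighborFinset v m).mp hm).symm
          rw [Finset.card_erase_of_mem hvm, card_neighborFinset_eq_degree]
          exact Nat.sub_le_sub_right (hD m) 1
      _ ≤ D * (D - 1) := by
          rw [Finset.sum_const, smul_eq_mul, card_neighborFinset_eq_degree]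
          exact Nat.mul_le_mul_right _ (hD v)
  have hfirst : (G.neighborFinset v).card ≤ D :=
    (G.card_neighborFinset_eq_degree v).trans_le (hD v)
  have hsq : D + D * (D - 1) = D ^ 2 := by cases D <;> simp [sq, Nat.mul_succ, add_comm]
  calc (G.ballTwo v).card ≤ (G.neighborFinset v).card +
        ((G.neighborFinset v).biUnion fun m => (G.neighborFinset m).erase v).card + 1 :=
        (Finset.card_insert_le _ _).trans (Nat.add_le_add_right (Finset.card_union_le _ _) 1)
    _ ≤ D ^ 2 + 1 := by omega

end BallTwo

theorem degree_le_maxDeg {V : Type*} [Fintype V] (G : SimpleGraph V) [DecidableRel G.Adj]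
    (v : V) : G.degree v ≤ maxDeg G := by
  have hbdd : BddAbove {d | ∃ v : V, (G.neighborSet v).ncard = d} := by
    refine ⟨Nat.card V, ?_⟩
    rintro d ⟨u, rfl⟩
    exact Set.ncard_le_card _
  refine le_csSup_of_le hbdd ⟨v, rfl⟩ (le_of_eq ?_)
  rw [← card_neighborFinset_eq_degree, neighborFinset_def, Set.ncard_eq_toFinset_card']

end SimpleGraph

open SimpleGraph

section Recoloring

variable {V : Type*} [DecidableEq V] {G : SimpleGraph V} [G.LocallyFinite]

theorem IsStarColoring.recolor {c c' : V → ℕ} {i : ℕ} (hc : IsStarColoring G c)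
    (hkeep : ∀ v, c v ≠ i → c' v = c v) (hfar : ∀ v, c v = i → c' v ∉ (G.ballTwo v).image c) :
    IsStarColoring G c' := by
  have hclose : ∀ p q, q ∈ G.ballTwo p → p ∈ G.ballTwo q → c' p = c' q → c p = c q := by
    intro p q hpq hqp h
    by_cases hp : c p = i <;> by_cases hq : c q = i
    · rw [hp, hq]
    · refine absurd (Finset.mem_image_of_mem c hpq) ?_
      rw [← hkeep q hq, ← h]
      exact hfar p hp
    · refine absurd (Finset.mem_image_of_mem c hqp) ?_
      rw [← hkeep p hp, h]
      exact hfar q hq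
    · rwa [← hkeep p hp, ← hkeep q hq]
  refine ⟨fun u w huw h => hc.1 huw ?_, ?_⟩
  · exact hclose u w (mem_ballTwo_of_adj huw) (mem_ballTwo_of_adj huw.symm) h
  · rintro a b x y hab hbx hxy hax hby hay ⟨hcax, hcby⟩
    refine hc.2 a b x y hab hbx hxy hax hby hay ⟨?_, ?_⟩
    · exact hclose a x (mem_ballTwo_of_adj_of_adj hab hbx)
        (mem_ballTwo_of_adj_of_adj hbx.symm hab.symm) hcax
    · exact hclose b y (mem_ballTwo_of_adj_of_adj hbx hxy)
        (mem_ballTwo_of_adj_of_adj hxy.symm hbx.symm) hcby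

theorem exists_starRecolorStep [Fintype V] {c : V → ℕ} {i : ℕ} (hc : IsStarColoring G c)
    (hi : i ∈ colorsUsed c) (hcard : ∀ v, ((G.ballTwo v).image c).card < (colorsUsed c).card) :
    ∃ c', StarRecolorStep G c' c := by
  choose f hf_used hf_far using fun v => Finset.exists_mem_notMem_of_card_lt_card (hcard v)
  set c' : V → ℕ := fun v => if c v = i then f v else c v
  have hkeep : ∀ v, c v ≠ i → c' v = c v := fun v hv => if_neg hv
  have hnew : ∀ v, c v = i → c' v = f v := fun v hv => if_pos hv
  refine ⟨c', hc, hc.recolor hkeep fun v hv => hnew v hv ▸ hf_far v, i, hi, hkeep, fun v hv => ?_⟩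
  rw [hnew v hv]
  refine ⟨fun h => hf_far v ?_, hf_used v⟩
  exact h ▸ hv ▸ Finset.mem_image_of_mem c (self_mem_ballTwo v)

end Recoloring

theorem IsStarBColoring.card_colorsUsed_le {V : Type*} [Fintype V] {G : SimpleGraph V}
    {c : V → ℕ} (hb : IsStarBColoring G c) : (colorsUsed c).card ≤ maxDeg G ^ 2 + 1 := by
  classical
  by_contra! hlt
  obtain ⟨i, hi⟩ := Finset.card_pos.mp (by omega : 0 < (colorsUsed c).card)
  have hcard : ∀ v, ((G.ballTwo v).image c).card < (colorsUsed c).card := fun v =>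
    Finset.card_image_le.trans_lt <| (card_ballTwo_le (degree_le_maxDeg G) v).trans_lt hlt
  obtain ⟨c', hstep⟩ := exists_starRecolorStep hb.1 hi hcard
  exact hb.2 c' hstep

/-- **Corollary.** For every finite simple graph `G`, `Sᵦ(G) ≤ Δ(G)² + 1`. -/
theorem starBChromaticNumber_le_maxDeg_sq_add_one [Fintype V] (G : SimpleGraph V) :
    starBChromaticNumber G ≤ maxDeg G ^ 2 + 1 := by
  refine csSup_le' ?_
  rintro n ⟨c, hb, rfl⟩
  exact hb.card_colorsUsed_le
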